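/- Let v : ℝⁿ → ℝ (n ≥ 3) be a nonnegative C² solution of Δv = n(n−2) v^{N−1} with N = 2n/(n−2), where Δ = −∑∂²/∂xᵢ² is the positive Laplacian, satisfying v(0) = 1 and 0 ≤ v ≤ 1. Then v > 0 everywhere on ℝⁿ. -/

import Mathlib

/-!
The right-hand side of the equation is nonnegative, so `v` is superharmonic (`Δv ≥ 0` for the
positive Laplacian) and the strong minimum principle applies; it is proved with Hopf's barrier.
If `u ≥ 0` is superharmonic with `u(0) > 0` and `x₀` is a zero of `u` nearest to the origin,
then `u` is positive on the ball of radius `d = ‖x₀‖`, hence at least some `m > 0` on the ball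
of radius `d/2`. The Gaussian barrier `h = exp(-α‖y‖²) - exp(-4αd²)` satisfies `Δh < 0` on the
annulus `d/2 < ‖y‖ < 2d` for `α` large, so `w = u - m h` has `Δw > 0` there and cannot attain an
interior minimum, because at a local minimum every second directional derivative is
nonnegative. On the two boundary spheres `w ≥ 0`, but `w(x₀) = -m h(x₀) < 0`.
-/

open Real

/-- The positive (geometric) Laplacian `Δ = −∑ ∂²/∂xᵢ²` on `ℝⁿ`. -/
noncomputable def posLaplacian (n : ℕ) (v : EuclideanSpace ℝ (Fin n) → ℝ)
    (x : EuclideanSpace ℝ (Fin n)) : ℝ :=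
  -∑ i : Fin n,
    fderiv ℝ (fun y => fderiv ℝ v y (EuclideanSpace.single i 1)) x (EuclideanSpace.single i 1)

open Filter Topology Metric RealInnerProductSpace

theorem IsLocalMin.deriv_deriv_nonneg {g : ℝ → ℝ} {a : ℝ} (h : IsLocalMin g a)
    (hc : ContinuousAt g a) : 0 ≤ deriv (deriv g) a := by
  by_contra! hneg
  -- then `a` is also a local maximum, so `g` is locally constant and `g'' a = 0`
  have hmax := isLocalMax_of_deriv_deriv_neg hneg h.deriv_eq_zero hc
  have hconst : g =ᶠ[𝓝 a] fun _ => g a := (h.and hmax).mono fun _ hx => le_antisymm hx.2 hx.1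
  have h0 := hconst.deriv.deriv_eq
  simp only [deriv_const', deriv_const] at h0
  linarith

section DirectionalSecondDerivative

variable {E : Type*} [NormedAddCommGroup E] [NormedSpace ℝ E]

theorem ContDiff.differentiable_fderiv_apply {u : E → ℝ} (hu : ContDiff ℝ 2 u) (ξ : E) :
    Differentiable ℝ fun y => fderiv ℝ u y ξ :=
  ((hu.fderiv_right (m := 1) le_rfl).clm_apply contDiff_const).differentiable one_ne_zero

theorem deriv_deriv_comp_add_smul {u : E → ℝ} (hu : ContDiff ℝ 2 u) (x ξ : E) :
    deriv (deriv fun t : ℝ => u (x + t • ξ)) 0 = fderiv ℝ (fun y => fderiv ℝ u y ξ) x ξ := by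
  have hline (t : ℝ) : HasDerivAt (fun s : ℝ => x + s • ξ) ξ t := by
    simpa using ((hasDerivAt_id t).smul_const ξ).const_add x
  have hu' : deriv (fun t : ℝ => u (x + t • ξ)) = fun t => fderiv ℝ u (x + t • ξ) ξ :=
    funext fun t => ((hu.differentiable two_ne_zero).differentiableAt.hasFDerivAt.comp_hasDerivAt
      t (hline t)).deriv
  have h2 := ((hu.differentiable_fderiv_apply ξ (x + (0 : ℝ) • ξ)).hasFDerivAt.comp_hasDerivAt
    0 (hline 0)).deriv
  rw [zero_smul, add_zero] at h2
  rw [hu']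
  exact h2

theorem IsLocalMin.fderiv_fderiv_apply_nonneg {u : E → ℝ} {x : E} (h : IsLocalMin u x)
    (hu : ContDiff ℝ 2 u) (ξ : E) : 0 ≤ fderiv ℝ (fun y => fderiv ℝ u y ξ) x ξ := by
  have hline : Continuous fun t : ℝ => x + t • ξ := by fun_prop
  rw [← deriv_deriv_comp_add_smul hu]
  refine IsLocalMin.deriv_deriv_nonneg ?_ (hu.continuous.comp hline).continuousAt
  exact IsLocalMin.comp_continuous (by simpa using h) hline.continuousAt

theorem fderiv_fderiv_apply_sub_const_mul {u h : E → ℝ} (hu : ContDiff ℝ 2 u)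
    (hh : ContDiff ℝ 2 h) (c : ℝ) (x ξ : E) :
    fderiv ℝ (fun y => fderiv ℝ (fun z => u z - c * h z) y ξ) x ξ =
      fderiv ℝ (fun y => fderiv ℝ u y ξ) x ξ - c * fderiv ℝ (fun y => fderiv ℝ h y ξ) x ξ := by
  have du := hu.differentiable two_ne_zero
  have dh := hh.differentiable two_ne_zero
  have hfd : (fun y => fderiv ℝ (fun z => u z - c * h z) y ξ) =
      fun y => fderiv ℝ u y ξ - c * fderiv ℝ h y ξ := by
    funext y
    rw [fderiv_fun_sub (du y) ((dh y).const_mul c), fderiv_const_mul (dh y)]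
    simp
  have du' := hu.differentiable_fderiv_apply ξ
  have dh' := hh.differentiable_fderiv_apply ξ
  rw [hfd, fderiv_fun_sub (du' x) ((dh' x).const_mul c), fderiv_const_mul (dh' x)]
  simp

end DirectionalSecondDerivative

section GaussianBarrier

variable {F : Type*} [NormedAddCommGroup F]

noncomputable def gaussianBarrier (α R : ℝ) (y : F) : ℝ :=
  exp (-α * ‖y‖ ^ 2) - exp (-α * R ^ 2)

theorem gaussianBarrier_le_one {α : ℝ} (hα : 0 ≤ α) (R : ℝ) (y : F) :
    gaussianBarrier α R y ≤ 1 := by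
  have h1 : exp (-α * ‖y‖ ^ 2) ≤ 1 := exp_le_one_iff.2 (by nlinarith [sq_nonneg ‖y‖])
  rw [gaussianBarrier]
  linarith [exp_pos (-α * R ^ 2)]

theorem gaussianBarrier_of_norm_eq (α : ℝ) {R : ℝ} {y : F} (hy : ‖y‖ = R) :
    gaussianBarrier α R y = 0 := by
  simp [gaussianBarrier, hy]

theorem gaussianBarrier_pos {α R : ℝ} (hα : 0 < α) {y : F} (hy : ‖y‖ < R) :
    0 < gaussianBarrier α R y := by
  have hsq : ‖y‖ ^ 2 < R ^ 2 := pow_lt_pow_left₀ hy (norm_nonneg y) two_ne_zero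
  exact sub_pos.2 (exp_lt_exp.2 (by nlinarith))

variable [InnerProductSpace ℝ F]

theorem contDiff_gaussianBarrier (α R : ℝ) : ContDiff ℝ 2 (gaussianBarrier (F := F) α R) :=
  ((contDiff_const.mul (contDiff_norm_sq ℝ)).exp).sub contDiff_const

theorem fderiv_fderiv_apply_exp_neg_mul_norm_sq (α : ℝ) (x ξ : F) :
    fderiv ℝ (fun y => fderiv ℝ (fun z => exp (-α * ‖z‖ ^ 2)) y ξ) x ξ =
      exp (-α * ‖x‖ ^ 2) * (4 * α ^ 2 * ⟪x, ξ⟫ ^ 2 - 2 * α * ‖ξ‖ ^ 2) := by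
  rw [← deriv_deriv_comp_add_smul ((contDiff_const.mul (contDiff_norm_sq ℝ)).exp)]
  have hline : (fun t : ℝ => exp (-α * ‖x + t • ξ‖ ^ 2)) =
      fun t => exp (-α * (‖x‖ ^ 2 + 2 * ⟪x, ξ⟫ * t + ‖ξ‖ ^ 2 * t ^ 2)) := by
    funext t
    rw [norm_add_sq_real, inner_smul_right, norm_smul, mul_pow, norm_eq_abs, sq_abs]
    ring_nf
  rw [hline]
  set b := ⟪x, ξ⟫
  set s := ‖ξ‖ ^ 2
  have hq (t : ℝ) : HasDerivAt (fun t : ℝ => -α * (‖x‖ ^ 2 + 2 * b * t + s * t ^ 2))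
      (-α * (2 * b + 2 * s * t)) t := by
    refine ((((hasDerivAt_id t).const_mul (2 * b)).const_add (‖x‖ ^ 2)).add
      ((hasDerivAt_pow 2 t).const_mul s)).const_mul (-α) |>.congr_deriv ?_
    push_cast
    ring
  have hd : deriv (fun t : ℝ => exp (-α * (‖x‖ ^ 2 + 2 * b * t + s * t ^ 2))) =
      fun t => exp (-α * (‖x‖ ^ 2 + 2 * b * t + s * t ^ 2)) * (-α * (2 * b + 2 * s * t)) :=
    funext fun t => (hq t).exp.deriv
  have hlin : HasDerivAt (fun t : ℝ => -α * (2 * b + 2 * s * t)) (-α * (2 * s)) 0 := by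
    simpa using (((hasDerivAt_id (0 : ℝ)).const_mul (2 * s)).const_add (2 * b)).const_mul (-α)
  rw [hd, ((hq 0).exp.fun_mul hlin).deriv]
  simp only [mul_zero, add_zero, zero_pow two_ne_zero]
  ring

end GaussianBarrier

section Laplacian

variable {n : ℕ}

theorem IsLocalMin.posLaplacian_nonpos {u : EuclideanSpace ℝ (Fin n) → ℝ}
    {x : EuclideanSpace ℝ (Fin n)} (h : IsLocalMin u x) (hu : ContDiff ℝ 2 u) :
    posLaplacian n u x ≤ 0 :=
  neg_nonpos.2 (Finset.sum_nonneg fun _ _ => h.fderiv_fderiv_apply_nonneg hu _)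

theorem posLaplacian_sub_const_mul {u h : EuclideanSpace ℝ (Fin n) → ℝ} (hu : ContDiff ℝ 2 u)
    (hh : ContDiff ℝ 2 h) (c : ℝ) (x : EuclideanSpace ℝ (Fin n)) :
    posLaplacian n (fun y => u y - c * h y) x = posLaplacian n u x - c * posLaplacian n h x := by
  simp only [posLaplacian, fderiv_fderiv_apply_sub_const_mul hu hh, Finset.sum_sub_distrib,
    ← Finset.mul_sum]
  ring

theorem posLaplacian_gaussianBarrier (α R : ℝ) (x : EuclideanSpace ℝ (Fin n)) :
    posLaplacian n (gaussianBarrier α R) x =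
      exp (-α * ‖x‖ ^ 2) * (2 * n * α - 4 * α ^ 2 * ‖x‖ ^ 2) := by
  unfold gaussianBarrier
  simp only [posLaplacian, fderiv_sub_const, fderiv_fderiv_apply_exp_neg_mul_norm_sq,
    EuclideanSpace.inner_single_right, PiLp.norm_single, norm_one, one_pow, mul_one, one_mul,
    conj_trivial]
  rw [← Finset.mul_sum, Finset.sum_sub_distrib, ← Finset.mul_sum,
    ← EuclideanSpace.real_norm_sq_eq, Finset.sum_const, Finset.card_univ, Fintype.card_fin,
    nsmul_eq_mul]
  ring

theorem posLaplacian_gaussianBarrier_neg {α : ℝ} (hα : 0 < α) (R : ℝ)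
    {x : EuclideanSpace ℝ (Fin n)} (hx : n < 2 * α * ‖x‖ ^ 2) :
    posLaplacian n (gaussianBarrier α R) x < 0 := by
  rw [posLaplacian_gaussianBarrier]
  exact mul_neg_of_pos_of_neg (exp_pos _) (by nlinarith)

theorem nonneg_of_posLaplacian_pos_annulus {w : EuclideanSpace ℝ (Fin n) → ℝ} {r R : ℝ}
    (hw : ContDiff ℝ 2 w) (hint : ∀ z, r < ‖z‖ → ‖z‖ < R → 0 < posLaplacian n w z)
    (hinner : ∀ z, ‖z‖ = r → 0 ≤ w z) (houter : ∀ z, ‖z‖ = R → 0 ≤ w z)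
    {y : EuclideanSpace ℝ (Fin n)} (hry : r ≤ ‖y‖) (hyR : ‖y‖ ≤ R) : 0 ≤ w y := by
  set K := closedBall (0 : EuclideanSpace ℝ (Fin n)) R \ ball 0 r
  have hmemK (z) : z ∈ K ↔ r ≤ ‖z‖ ∧ ‖z‖ ≤ R := by simp [K, and_comm]
  obtain ⟨z, hzK, hmin⟩ := ((isCompact_closedBall 0 R).diff isOpen_ball).exists_isMinOn
    ⟨y, (hmemK y).2 ⟨hry, hyR⟩⟩ hw.continuous.continuousOn
  suffices hz : 0 ≤ w z from hz.trans (hmin ((hmemK y).2 ⟨hry, hyR⟩))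
  obtain ⟨hrz, hzR⟩ := (hmemK z).1 hzK
  rcases hrz.eq_or_lt with hrz | hrz
  · exact hinner z hrz.symm
  rcases hzR.eq_or_lt with hzR | hzR
  · exact houter z hzR
  have hU : IsOpen {z : EuclideanSpace ℝ (Fin n) | r < ‖z‖ ∧ ‖z‖ < R} :=
    (isOpen_lt continuous_const continuous_norm).inter (isOpen_lt continuous_norm continuous_const)
  have hK : K ∈ 𝓝 z :=
    mem_of_superset (hU.mem_nhds ⟨hrz, hzR⟩) fun z hz => (hmemK z).2 ⟨hz.1.le, hz.2.le⟩
  exact absurd ((hmin.isLocalMin hK).posLaplacian_nonpos hw) (hint z hrz hzR).not_ge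

end Laplacian

theorem exists_zero_forall_norm_lt_ne_zero {E : Type*} [NormedAddCommGroup E] [ProperSpace E]
    {u : E → ℝ} (hu : Continuous u) {x : E} (hx : u x = 0) :
    ∃ x₀, u x₀ = 0 ∧ ∀ y, ‖y‖ < ‖x₀‖ → u y ≠ 0 := by
  obtain ⟨x₀, hx₀, hdist⟩ := (isClosed_singleton.preimage hu).exists_infDist_eq_dist ⟨x, hx⟩ 0
  refine ⟨x₀, hx₀, fun y hy hy0 => ?_⟩
  have := infDist_le_dist_of_mem (x := (0 : E)) (show y ∈ u ⁻¹' {0} from hy0)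
  rw [hdist, dist_zero_left, dist_zero_left] at this
  linarith

theorem pos_of_posLaplacian_nonneg {n : ℕ} {u : EuclideanSpace ℝ (Fin n) → ℝ}
    (hu : ContDiff ℝ 2 u) (hnonneg : ∀ x, 0 ≤ u x) (hsuper : ∀ x, 0 ≤ posLaplacian n u x)
    (h0 : 0 < u 0) (x : EuclideanSpace ℝ (Fin n)) : 0 < u x := by
  by_contra! hx
  obtain ⟨x₀, hx₀, hball⟩ :=
    exists_zero_forall_norm_lt_ne_zero hu.continuous (le_antisymm hx (hnonneg x))
  set d := ‖x₀‖
  have hd : 0 < d := norm_pos_iff.2 fun h => by rw [h] at hx₀; linarith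
  obtain ⟨xm, hxm, hmin⟩ := (isCompact_closedBall (0 : EuclideanSpace ℝ (Fin n)) (d / 2)
    ).exists_isMinOn ⟨0, mem_closedBall_self (by positivity)⟩ hu.continuous.continuousOn
  set m := u xm
  have hm : 0 < m :=
    (hnonneg xm).lt_of_ne' (hball xm (by rw [mem_closedBall_zero_iff] at hxm; linarith))
  -- `2 α (d/2)² = 2 (n + 1) > n`, which makes `Δh < 0` on the annulus
  set α := 4 * (n + 1) / d ^ 2
  have hα : 0 < α := by positivity
  set h := gaussianBarrier (F := EuclideanSpace ℝ (Fin n)) α (2 * d)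
  have hw : 0 ≤ u x₀ - m * h x₀ := by
    refine nonneg_of_posLaplacian_pos_annulus (w := fun y => u y - m * h y) (r := d / 2)
      (R := 2 * d) (hu.sub (contDiff_const.mul (contDiff_gaussianBarrier α _)))
      (fun z hz _ => ?_) (fun z hz => ?_) (fun z hz => ?_) (by linarith) (by linarith)
    · have hαd : α * d ^ 2 = 4 * (n + 1) := div_mul_cancel₀ _ (by positivity)
      have hzsq : (d / 2) ^ 2 < ‖z‖ ^ 2 := pow_lt_pow_left₀ hz (by positivity) two_ne_zero
      have hz2 : n < 2 * α * ‖z‖ ^ 2 := by nlinarith [mul_lt_mul_of_pos_left hzsq hα]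
      rw [posLaplacian_sub_const_mul hu (contDiff_gaussianBarrier α _)]
      nlinarith [hsuper z, posLaplacian_gaussianBarrier_neg hα (2 * d) hz2]
    · have hmz : m ≤ u z := hmin (mem_closedBall_zero_iff.2 hz.le)
      nlinarith [gaussianBarrier_le_one hα.le (2 * d) z]
    · simpa [h, gaussianBarrier_of_norm_eq α hz] using hnonneg z
  have hh : 0 < h x₀ := gaussianBarrier_pos (R := 2 * d) hα (by linarith)
  rw [hx₀] at hw
  nlinarith

theorem pos_of_solution_bubble_equation_general
    (n : ℕ) (hn : 3 ≤ n)
    (v : EuclideanSpace ℝ (Fin n) → ℝ)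
    (hv : ContDiff ℝ 2 v)
    (hvnonneg : ∀ x, 0 ≤ v x)
    (hv0 : v 0 = 1)
    (heq : ∀ x, posLaplacian n v x =
      n * (n - 2) * v x ^ ((2 * (n:ℝ) / ((n:ℝ) - 2)) - 1)) :
    ∀ x, 0 < v x := by
  have hn2 : (0 : ℝ) ≤ n - 2 := by
    have : (3 : ℝ) ≤ n := by exact_mod_cast hn
    linarith
  refine pos_of_posLaplacian_nonneg hv hvnonneg (fun x => ?_) (by rw [hv0]; exact one_pos)
  rw [heq x]
  exact mul_nonneg (mul_nonneg n.cast_nonneg hn2) (rpow_nonneg (hvnonneg x) _)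

/-- A nonnegative `C²` solution of `Δv = n(n−2) v^{N−1}` (`N = 2n/(n−2)`) on `ℝⁿ`, `n ≥ 3`,
with `v(0) = 1` and `0 ≤ v ≤ 1`, is everywhere positive. -/
theorem pos_of_solution_bubble_equation
    (n : ℕ) (hn : 3 ≤ n)
    (v : EuclideanSpace ℝ (Fin n) → ℝ)
    (hv : ContDiff ℝ 2 v)
    (hvnonneg : ∀ x, 0 ≤ v x) (hvle : ∀ x, v x ≤ 1)
    (hv0 : v 0 = 1)
    (heq : ∀ x, posLaplacian n v x =
      n * (n - 2) * v x ^ ((2 * (n:ℝ) / ((n:ℝ) - 2)) - 1)) :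
    ∀ x, 0 < v x :=
  pos_of_solution_bubble_equation_general n hn v hv hvnonneg hv0 heq
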